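/- arXiv:2102.03924 — 2 statements merged into one kernel-verified Lean document; each statement's English description precedes it below -/
import Mathlib

section
/- Ben-David target-error bound: let P, Q be distributions over X, f a labeling function, and H a hypothesis class. For any h ∈ H, E_Q(h) ≤ λ + E_P(h) + (1/2)·d_{HΔH}(P,Q), where λ = min_{h*∈H} [E_P(h*) + E_Q(h*)] (assume the minimum is attained). -/
open MeasureTheory Set

/-- H-divergence: `d_H(P,Q) = 2 · sup_{h ∈ H} |P(h=1) − Q(h=1)|`. -/
noncomputable def dH {X : Type*} [MeasurableSpace X] (H : Set (X → Bool))
    (P Q : Measure X) : ℝ :=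
  2 * ⨆ h : H, |(P {x | (h : X → Bool) x = true}).toReal -
      (Q {x | (h : X → Bool) x = true}).toReal|

/-- Symmetric difference hypothesis class `HΔH = { g = x ↦ |h₁ x − h₂ x| : h₁, h₂ ∈ H }`. -/
def sdH {X : Type*} (H : Set (X → Bool)) : Set (X → Bool) :=
  {g | ∃ h₁ ∈ H, ∃ h₂ ∈ H, g = fun x => xor (h₁ x) (h₂ x)}

/-- Disagreement error `E_P(u,v) = P({x : u x ≠ v x})`. -/
noncomputable def errD {X : Type*} [MeasurableSpace X] (P : Measure X)
    (u v : X → Bool) : ℝ :=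
  (P {x | u x ≠ v x}).toReal

lemma errD_triangle {X : Type*} [MeasurableSpace X] (μ : Measure X) [IsFiniteMeasure μ]
    (u v w : X → Bool) : errD μ u w ≤ errD μ u v + errD μ v w := by
  unfold errD
  have hsub : {x | u x ≠ w x} ⊆ {x | u x ≠ v x} ∪ {x | v x ≠ w x} := by
    intro x hx
    simp only [mem_union, mem_setOf_eq]
    by_contra hc
    push_neg at hc
    exact hx (hc.1.trans hc.2)
  calc (μ {x | u x ≠ w x}).toReal
      ≤ (μ {x | u x ≠ v x} + μ {x | v x ≠ w x}).toReal := by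
        refine ENNReal.toReal_mono ?_ ((measure_mono hsub).trans (measure_union_le _ _))
        exact ENNReal.add_ne_top.mpr ⟨measure_ne_top _ _, measure_ne_top _ _⟩
    _ = (μ {x | u x ≠ v x}).toReal + (μ {x | v x ≠ w x}).toReal :=
        ENNReal.toReal_add (measure_ne_top _ _) (measure_ne_top _ _)

theorem ben_david_bound {X : Type*} [MeasurableSpace X] (H : Set (X → Bool))
    (hH : ∀ h ∈ H, Measurable h)
    (f : X → Bool) (hf : Measurable f)
    (P Q : Measure X) [IsProbabilityMeasure P] [IsProbabilityMeasure Q]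
    (hstar : X → Bool) (hstarH : hstar ∈ H)
    (hstarMin : ∀ h' ∈ H, errD P hstar f + errD Q hstar f ≤ errD P h' f + errD Q h' f) :
    ∀ h ∈ H, errD Q h f ≤
      (errD P hstar f + errD Q hstar f) + errD P h f + (1 / 2) * dH (sdH H) P Q := by
  intro h hh
  set g : X → Bool := fun x => xor (h x) (hstar x) with hgdef
  have hg : g ∈ sdH H := ⟨h, hh, hstar, hstarH, rfl⟩
  have hset : ∀ (μ : Measure X), μ {x | h x ≠ hstar x} = μ {x | g x = true} := by
    intro μ
    congr 1
    ext x
    simp only [hgdef, mem_setOf_eq]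
    cases h x <;> cases hstar x <;> simp
  -- boundedness of the sup family
  have hbdd : BddAbove (Set.range fun k : (sdH H) =>
      |(P {x | (k : X → Bool) x = true}).toReal - (Q {x | (k : X → Bool) x = true}).toReal|) := by
    refine ⟨2, ?_⟩
    rintro r ⟨k, rfl⟩
    have h1 : (P {x | (k : X → Bool) x = true}).toReal ≤ 1 := by
      rw [← ENNReal.toReal_one]
      exact ENNReal.toReal_mono (by simp) prob_le_one
    have h2 : (Q {x | (k : X → Bool) x = true}).toReal ≤ 1 := by
      rw [← ENNReal.toReal_one]
      exact ENNReal.toReal_mono (by simp) prob_le_one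
    have h3 : 0 ≤ (P {x | (k : X → Bool) x = true}).toReal := ENNReal.toReal_nonneg
    have h4 : 0 ≤ (Q {x | (k : X → Bool) x = true}).toReal := ENNReal.toReal_nonneg
    rw [abs_sub_le_iff]
    constructor <;> linarith
  have hle : |(P {x | g x = true}).toReal - (Q {x | g x = true}).toReal| ≤
      (1 / 2) * dH (sdH H) P Q := by
    have := le_ciSup hbdd (⟨g, hg⟩ : (sdH H))
    unfold dH
    linarith
  have key : errD Q h hstar ≤ errD P h hstar + (1 / 2) * dH (sdH H) P Q := by
    unfold errD
    rw [hset P, hset Q]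
    have := abs_le.mp hle
    linarith [this.1, this.2]
  have t1 : errD Q h f ≤ errD Q h hstar + errD Q hstar f := errD_triangle Q h hstar f
  have t2 : errD P h hstar ≤ errD P h f + errD P f hstar := errD_triangle P h f hstar
  have hsymm : errD P f hstar = errD P hstar f := by
    unfold errD
    congr 2
    ext x
    exact ⟨Ne.symm, Ne.symm⟩
  linarith
end

section
/- Generalized multi-source bound: let Q and P₁,…,P_k be distributions over X, φ₁,…,φ_k nonnegative weights summing to 1, and S a distribution satisfying Σ_i φ_i · d_{HΔH}(P_i, S) ≤ max_{i,j} d_{HΔH}(P_i, P_j). Then for any h ∈ H, E_Q(h) ≤ Σ_i φ_i λ_i + Σ_i φ_i E_{P_i}(h) + (1/2)·d_{HΔH}(S, Q) + (1/2)·max_{i,j} d_{HΔH}(P_i, P_j), where λ_i = min_{h'∈H}[E_{P_i}(h') + E_Q(h')] (assume each minimum is attained). -/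
open MeasureTheory Set

lemma dH_comm {X : Type*} [MeasurableSpace X] (H : Set (X → Bool)) (P Q : Measure X) :
    dH H P Q = dH H Q P := by
  unfold dH
  congr 1
  exact iSup_congr fun h => abs_sub_comm _ _

lemma errD_comm {X : Type*} [MeasurableSpace X] (μ : Measure X) (u v : X → Bool) :
    errD μ u v = errD μ v u := by
  unfold errD
  congr 2
  ext x
  simp [ne_comm]

lemma errD_le_dH {X : Type*} [MeasurableSpace X] (H : Set (X → Bool))
    (P Q : Measure X) [IsProbabilityMeasure P] [IsProbabilityMeasure Q]
    (h₁ h₂ : X → Bool) (m1 : h₁ ∈ H) (m2 : h₂ ∈ H) :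
    errD P h₁ h₂ ≤ errD Q h₁ h₂ + (1 / 2) * dH (sdH H) P Q := by
  set g : X → Bool := fun x => xor (h₁ x) (h₂ x) with hg
  have hgmem : g ∈ sdH H := ⟨h₁, m1, h₂, m2, rfl⟩
  have hset : {x | h₁ x ≠ h₂ x} = {x | g x = true} := by
    ext x
    simp only [mem_setOf_eq, hg]
    cases h₁ x <;> cases h₂ x <;> simp
  have hbdd : BddAbove (Set.range fun h : sdH H =>
      |(P {x | (h : X → Bool) x = true}).toReal - (Q {x | (h : X → Bool) x = true}).toReal|) := by
    refine ⟨2, ?_⟩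
    rintro r ⟨h, rfl⟩
    have hp : (P {x | (h : X → Bool) x = true}).toReal ≤ 1 := by
      have := ENNReal.toReal_mono (by finiteness) (measure_mono (subset_univ {x | (h : X → Bool) x = true}) : P _ ≤ P univ)
      simpa using this
    have hq : (Q {x | (h : X → Bool) x = true}).toReal ≤ 1 := by
      have := ENNReal.toReal_mono (by finiteness) (measure_mono (subset_univ {x | (h : X → Bool) x = true}) : Q _ ≤ Q univ)
      simpa using this
    have hp0 : 0 ≤ (P {x | (h : X → Bool) x = true}).toReal := ENNReal.toReal_nonneg
    have hq0 : 0 ≤ (Q {x | (h : X → Bool) x = true}).toReal := ENNReal.toReal_nonneg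
    rw [abs_sub_le_iff]
    constructor <;> linarith
  have hle : |(P {x | g x = true}).toReal - (Q {x | g x = true}).toReal| ≤
      ⨆ h : sdH H, |(P {x | (h : X → Bool) x = true}).toReal -
        (Q {x | (h : X → Bool) x = true}).toReal| :=
    le_ciSup hbdd (⟨g, hgmem⟩ : sdH H)
  have habs : errD P h₁ h₂ - errD Q h₁ h₂ ≤
      |(P {x | g x = true}).toReal - (Q {x | g x = true}).toReal| := by
    unfold errD
    rw [hset]
    exact le_abs_self _
  have hdh : (1 / 2) * dH (sdH H) P Q =
      ⨆ h : sdH H, |(P {x | (h : X → Bool) x = true}).toReal -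
        (Q {x | (h : X → Bool) x = true}).toReal| := by
    unfold dH; ring
  linarith [hdh ▸ (habs.trans hle)]

theorem multi_source_bound {X : Type*} [MeasurableSpace X] (H : Set (X → Bool))
    (hH : ∀ h ∈ H, Measurable h)
    (f : X → Bool) (hf : Measurable f)
    (k : ℕ) (hk : 0 < k)
    (P : Fin k → Measure X) (hP : ∀ i, IsProbabilityMeasure (P i))
    (Q S : Measure X) [IsProbabilityMeasure Q] [IsProbabilityMeasure S]
    (φ : Fin k → ℝ) (hφ : ∀ i, 0 ≤ φ i) (hφ1 : ∑ i, φ i = 1)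
    (hstar : Fin k → (X → Bool)) (hstarH : ∀ i, hstar i ∈ H)
    (hstarMin : ∀ i, ∀ h' ∈ H,
      errD (P i) (hstar i) f + errD Q (hstar i) f ≤ errD (P i) h' f + errD Q h' f)
    (hcond : ∑ i, φ i * dH (sdH H) (P i) S ≤ ⨆ i, ⨆ j, dH (sdH H) (P i) (P j)) :
    ∀ h ∈ H, errD Q h f ≤
      (∑ i, φ i * (errD (P i) (hstar i) f + errD Q (hstar i) f)) +
      (∑ i, φ i * errD (P i) h f) +
      (1 / 2) * dH (sdH H) S Q +
      (1 / 2) * ⨆ i, ⨆ j, dH (sdH H) (P i) (P j) := by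
  intro h hh
  have key : ∀ i, errD Q h f ≤ (errD (P i) (hstar i) f + errD Q (hstar i) f) +
      errD (P i) h f + (1 / 2) * dH (sdH H) (P i) S + (1 / 2) * dH (sdH H) S Q := by
    intro i
    haveI := hP i
    have t1 : errD Q h f ≤ errD Q h (hstar i) + errD Q (hstar i) f :=
      errD_triangle Q h (hstar i) f
    have t2 : errD Q h (hstar i) ≤ errD S h (hstar i) + (1 / 2) * dH (sdH H) Q S :=
      errD_le_dH H Q S h (hstar i) hh (hstarH i)
    have t3 : errD S h (hstar i) ≤ errD (P i) h (hstar i) + (1 / 2) * dH (sdH H) S (P i) :=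
      errD_le_dH H S (P i) h (hstar i) hh (hstarH i)
    have t4 : errD (P i) h (hstar i) ≤ errD (P i) h f + errD (P i) f (hstar i) :=
      errD_triangle (P i) h f (hstar i)
    have e1 : errD (P i) f (hstar i) = errD (P i) (hstar i) f := errD_comm _ _ _
    have e2 : dH (sdH H) Q S = dH (sdH H) S Q := dH_comm _ _ _
    have e3 : dH (sdH H) S (P i) = dH (sdH H) (P i) S := dH_comm _ _ _
    linarith
  calc errD Q h f = ∑ i, φ i * errD Q h f := by
        rw [← Finset.sum_mul, hφ1, one_mul]
    _ ≤ ∑ i, φ i * ((errD (P i) (hstar i) f + errD Q (hstar i) f) +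
        errD (P i) h f + (1 / 2) * dH (sdH H) (P i) S + (1 / 2) * dH (sdH H) S Q) :=
        Finset.sum_le_sum fun i _ => mul_le_mul_of_nonneg_left (key i) (hφ i)
    _ = (∑ i, φ i * (errD (P i) (hstar i) f + errD Q (hstar i) f)) +
        (∑ i, φ i * errD (P i) h f) +
        (1 / 2) * (∑ i, φ i * dH (sdH H) (P i) S) +
        (1 / 2) * dH (sdH H) S Q := by
        have hc : (1 / 2) * dH (sdH H) S Q = ∑ i, φ i * ((1 / 2) * dH (sdH H) S Q) := by
          rw [← Finset.sum_mul, hφ1, one_mul]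
        conv_rhs => rw [Finset.mul_sum, hc]
        rw [← Finset.sum_add_distrib, ← Finset.sum_add_distrib, ← Finset.sum_add_distrib]
        exact Finset.sum_congr rfl fun i _ => by ring
    _ ≤ (∑ i, φ i * (errD (P i) (hstar i) f + errD Q (hstar i) f)) +
        (∑ i, φ i * errD (P i) h f) +
      (1 / 2) * dH (sdH H) S Q +
      (1 / 2) * ⨆ i, ⨆ j, dH (sdH H) (P i) (P j) := by
        have := mul_le_mul_of_nonneg_left hcond (by norm_num : (0:ℝ) ≤ 1/2)
        linarith
end
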